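/- Let K ⊆ ℝⁿ be a proper subdual cone, C = 𝕊^{n-1} ∩ int(K), and A ∈ ℝ^{n×n} a symmetric matrix. Then the quadratic function q_A : C → ℝ, q_A(x) = ⟨Ax, x⟩, is spherically quasi-convex if and only if for every c ∈ ℝ the cone {x ∈ K : ⟨(A − c·I)x, x⟩ ≤ 0} is a convex subset of ℝⁿ. -/

import Mathlib

open scoped InnerProductSpace

/-- The (constant-speed) parametrization on `[0,1]` of the minimal geodesic segment of the
unit sphere joining `x` to a non-antipodal point `y`, namely
`t ↦ (cos(t·d(x,y)) - ⟪x,y⟫ sin(t·d(x,y))/√(1-⟪x,y⟫²)) • x + (sin(t·d(x,y))/√(1-⟪x,y⟫²)) • y`,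
where `d(x,y) = arccos ⟪x,y⟫` is the intrinsic distance on the sphere. -/
noncomputable def geoSeg {n : ℕ} (x y : EuclideanSpace ℝ (Fin n)) (t : ℝ) :
    EuclideanSpace ℝ (Fin n) :=
  (Real.cos (t * Real.arccos ⟪x, y⟫_ℝ) -
      ⟪x, y⟫_ℝ * Real.sin (t * Real.arccos ⟪x, y⟫_ℝ) / Real.sqrt (1 - ⟪x, y⟫_ℝ ^ 2)) • x +
    (Real.sin (t * Real.arccos ⟪x, y⟫_ℝ) / Real.sqrt (1 - ⟪x, y⟫_ℝ ^ 2)) • y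

/-- `γ`, parametrized (with constant speed) on `[0,1]`, is a minimal geodesic segment of the
unit sphere joining `x` to `y`.  For `y ≠ -x` it is the unique such segment `geoSeg x y`
(which is constantly `x` when `y = x`); for `y = -x` it is
`t ↦ cos(tπ) • x + sin(tπ) • v` for some unit vector `v` orthogonal to `x`. -/
def IsMinGeodesic {n : ℕ} (γ : ℝ → EuclideanSpace ℝ (Fin n))
    (x y : EuclideanSpace ℝ (Fin n)) : Prop :=
  ‖x‖ = 1 ∧ ‖y‖ = 1 ∧
    ((y ≠ -x ∧ γ = geoSeg x y) ∨
      (y = -x ∧ ∃ v : EuclideanSpace ℝ (Fin n), ‖v‖ = 1 ∧ ⟪x, v⟫_ℝ = 0 ∧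
        γ = fun t => Real.cos (t * Real.pi) • x + Real.sin (t * Real.pi) • v))

/-- A subset of the unit sphere is spherically convex if it contains every minimal geodesic
segment joining any two of its points. -/
def SphericallyConvex {n : ℕ} (C : Set (EuclideanSpace ℝ (Fin n))) : Prop :=
  ∀ x ∈ C, ∀ y ∈ C, ∀ γ : ℝ → EuclideanSpace ℝ (Fin n),
    IsMinGeodesic γ x y → ∀ t ∈ Set.Icc (0 : ℝ) 1, γ t ∈ C

/-- `f` is spherically quasi-convex on `C`: along every minimal geodesic segment lying in `C`,
the composition with `f` is quasi-convex, i.e. `f(γ t) ≤ max (f(γ t₁)) (f(γ t₂))` for all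
`t ∈ [t₁, t₂]`. -/
def SphQuasiConvexOn {n : ℕ} (C : Set (EuclideanSpace ℝ (Fin n)))
    (f : EuclideanSpace ℝ (Fin n) → ℝ) : Prop :=
  ∀ x ∈ C, ∀ y ∈ C, ∀ γ : ℝ → EuclideanSpace ℝ (Fin n),
    IsMinGeodesic γ x y → (∀ t ∈ Set.Icc (0 : ℝ) 1, γ t ∈ C) →
    ∀ t₁ t t₂ : ℝ, 0 ≤ t₁ → t₁ ≤ t → t ≤ t₂ → t₂ ≤ 1 →
      f (γ t) ≤ max (f (γ t₁)) (f (γ t₂))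

/-- Multiplication of an `n × n` real matrix with a vector of `EuclideanSpace ℝ (Fin n)`. -/
noncomputable def mulVecE {n : ℕ} (A : Matrix (Fin n) (Fin n) ℝ)
    (x : EuclideanSpace ℝ (Fin n)) : EuclideanSpace ℝ (Fin n) :=
  WithLp.toLp 2 (fun i => ∑ j, A i j * x j)

lemma mulVecE_smul {n : ℕ} (A : Matrix (Fin n) (Fin n) ℝ) (μ : ℝ)
    (x : EuclideanSpace ℝ (Fin n)) : mulVecE A (μ • x) = μ • mulVecE A x := by
  ext i
  simp only [mulVecE, PiLp.toLp_apply, PiLp.smul_apply, smul_eq_mul, Finset.mul_sum]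
  exact Finset.sum_congr rfl fun j _ => by ring

lemma mulVecE_add {n : ℕ} (A : Matrix (Fin n) (Fin n) ℝ)
    (x y : EuclideanSpace ℝ (Fin n)) : mulVecE A (x + y) = mulVecE A x + mulVecE A y := by
  ext i
  simp only [mulVecE, PiLp.toLp_apply, PiLp.add_apply, mul_add, Finset.sum_add_distrib]

lemma mulVecE_cont {n : ℕ} (A : Matrix (Fin n) (Fin n) ℝ) :
    Continuous (fun x : EuclideanSpace ℝ (Fin n) => mulVecE A x) := by
  have h : IsLinearMap ℝ (fun x : EuclideanSpace ℝ (Fin n) => mulVecE A x) :=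
    ⟨mulVecE_add A, fun c x => mulVecE_smul A c x⟩
  exact (IsLinearMap.mk' _ h).continuous_of_finiteDimensional

lemma qcont {n : ℕ} (A : Matrix (Fin n) (Fin n) ℝ) :
    Continuous (fun x : EuclideanSpace ℝ (Fin n) => ⟪mulVecE A x, x⟫_ℝ) :=
  continuous_inner.comp ((mulVecE_cont A).prodMk continuous_id)

lemma q_smul {n : ℕ} (A : Matrix (Fin n) (Fin n) ℝ) (μ : ℝ)
    (x : EuclideanSpace ℝ (Fin n)) :
    ⟪mulVecE A (μ • x), μ • x⟫_ℝ = μ ^ 2 * ⟪mulVecE A x, x⟫_ℝ := by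
  rw [mulVecE_smul, real_inner_smul_left, real_inner_smul_right]; ring

lemma q_shift {n : ℕ} (A : Matrix (Fin n) (Fin n) ℝ) (c : ℝ)
    (x : EuclideanSpace ℝ (Fin n)) :
    ⟪mulVecE (A - c • (1 : Matrix (Fin n) (Fin n) ℝ)) x, x⟫_ℝ
      = ⟪mulVecE A x, x⟫_ℝ - c * ‖x‖ ^ 2 := by
  have h : mulVecE (A - c • (1 : Matrix (Fin n) (Fin n) ℝ)) x = mulVecE A x - c • x := by
    ext i
    simp only [mulVecE, PiLp.toLp_apply, Matrix.sub_apply, Matrix.smul_apply, Matrix.one_apply, smul_eq_mul,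
      PiLp.sub_apply, PiLp.smul_apply, sub_mul, Finset.sum_sub_distrib]
    congr 1
    rw [Finset.sum_eq_single i]
    · simp
    · intro j _ hj; simp [Ne.symm hj]
    · intro h; exact absurd (Finset.mem_univ i) h
  rw [h, inner_sub_left, real_inner_smul_left, real_inner_self_eq_norm_sq]

lemma trig1 (θ t₁ t t₂ : ℝ) :
    Real.sin ((t₂ - t₁) * θ) * Real.sin ((1 - t) * θ)
      = Real.sin ((t₂ - t) * θ) * Real.sin ((1 - t₁) * θ)
        + Real.sin ((t - t₁) * θ) * Real.sin ((1 - t₂) * θ) := by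
  have e1 : (t₂ - t₁) * θ = t₂ * θ - t₁ * θ := by ring
  have e2 : (1 - t) * θ = θ - t * θ := by ring
  have e3 : (t₂ - t) * θ = t₂ * θ - t * θ := by ring
  have e4 : (1 - t₁) * θ = θ - t₁ * θ := by ring
  have e5 : (t - t₁) * θ = t * θ - t₁ * θ := by ring
  have e6 : (1 - t₂) * θ = θ - t₂ * θ := by ring
  rw [e1, e2, e3, e4, e5, e6]
  simp only [Real.sin_sub]
  ring

lemma trig2 (θ t₁ t t₂ : ℝ) :
    Real.sin ((t₂ - t₁) * θ) * Real.sin (t * θ)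
      = Real.sin ((t₂ - t) * θ) * Real.sin (t₁ * θ)
        + Real.sin ((t - t₁) * θ) * Real.sin (t₂ * θ) := by
  have e1 : (t₂ - t₁) * θ = t₂ * θ - t₁ * θ := by ring
  have e3 : (t₂ - t) * θ = t₂ * θ - t * θ := by ring
  have e5 : (t - t₁) * θ = t * θ - t₁ * θ := by ring
  rw [e1, e3, e5]
  simp only [Real.sin_sub]
  ring

lemma trig3 (α β : ℝ) :
    Real.sin α ^ 2 + 2 * (Real.sin α * Real.sin β) * Real.cos (α + β) + Real.sin β ^ 2
      = Real.sin (α + β) ^ 2 := by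
  rw [Real.sin_add, Real.cos_add]
  nlinarith [Real.sin_sq_add_cos_sq α, Real.sin_sq_add_cos_sq β]

-- geoSeg in the generic case
lemma geoSeg_eq {n : ℕ} {x y : EuclideanSpace ℝ (Fin n)}
    (h1 : -1 < ⟪x, y⟫_ℝ) (h2 : ⟪x, y⟫_ℝ < 1) (t : ℝ) :
    geoSeg x y t
      = (Real.sin ((1 - t) * Real.arccos ⟪x, y⟫_ℝ) / Real.sin (Real.arccos ⟪x, y⟫_ℝ)) • x
        + (Real.sin (t * Real.arccos ⟪x, y⟫_ℝ) / Real.sin (Real.arccos ⟪x, y⟫_ℝ)) • y := by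
  set c := ⟪x, y⟫_ℝ with hc
  set θ := Real.arccos c with hθ
  have hsin : Real.sin θ = Real.sqrt (1 - c ^ 2) := Real.sin_arccos c
  have hcos : Real.cos θ = c := Real.cos_arccos (le_of_lt h1) (le_of_lt h2)
  have hθpos : 0 < θ := Real.arccos_pos.2 h2
  have hθlt : θ < Real.pi := lt_of_le_of_ne (Real.arccos_le_pi c) (fun h => by have := Real.arccos_eq_pi.1 h; linarith)
  have hsinpos : 0 < Real.sin θ := Real.sin_pos_of_pos_of_lt_pi hθpos hθlt
  unfold geoSeg
  rw [← hc, ← hθ, ← hsin]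
  congr 1
  · congr 1
    have e : (1 - t) * θ = θ - t * θ := by ring
    rw [e, Real.sin_sub, ← hcos]
    field_simp

lemma geoSeg_self {n : ℕ} {x : EuclideanSpace ℝ (Fin n)} (hx : ‖x‖ = 1) (t : ℝ) :
    geoSeg x x t = x := by
  have h : ⟪x, x⟫_ℝ = 1 := by
    rw [real_inner_self_eq_norm_sq, hx]; norm_num
  unfold geoSeg
  rw [h, Real.arccos_one]
  simp

lemma geoSeg_zero {n : ℕ} (x y : EuclideanSpace ℝ (Fin n)) : geoSeg x y 0 = x := by
  unfold geoSeg
  simp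

lemma inner_lt_one_aux {n : ℕ} {x y : EuclideanSpace ℝ (Fin n)}
    (hx : ‖x‖ = 1) (hy : ‖y‖ = 1) : -1 ≤ ⟪x, y⟫_ℝ ∧ ⟪x, y⟫_ℝ ≤ 1 := by
  have h := abs_real_inner_le_norm x y
  rw [hx, hy] at h
  simp only [mul_one] at h
  constructor <;> [linarith [neg_abs_le (⟪x, y⟫_ℝ)]; linarith [le_abs_self (⟪x, y⟫_ℝ)]]

lemma geoSeg_one {n : ℕ} {x y : EuclideanSpace ℝ (Fin n)}
    (hx : ‖x‖ = 1) (hy : ‖y‖ = 1) (hne : ⟪x, y⟫_ℝ ≠ -1) : geoSeg x y 1 = y := by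
  obtain ⟨hge, hle⟩ := inner_lt_one_aux hx hy
  rcases hle.eq_or_lt with h | h
  · have hxy : x = y := (inner_eq_one_iff_of_norm_eq_one hx hy).1 h
    rw [← hxy, geoSeg_self hx]
  · have h1 : -1 < ⟪x, y⟫_ℝ := lt_of_le_of_ne hge (Ne.symm hne)
    have hθpos : 0 < Real.arccos ⟪x, y⟫_ℝ := Real.arccos_pos.2 h
    have hθlt : Real.arccos ⟪x, y⟫_ℝ < Real.pi :=
      lt_of_le_of_ne (Real.arccos_le_pi _) (fun hh => hne (by
        have := Real.arccos_eq_pi.1 hh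
        linarith))
    have hs : 0 < Real.sin (Real.arccos ⟪x, y⟫_ℝ) := Real.sin_pos_of_pos_of_lt_pi hθpos hθlt
    rw [geoSeg_eq h1 h]
    rw [show (1:ℝ) - 1 = 0 by norm_num, one_mul, zero_mul, Real.sin_zero, zero_div, zero_smul,
      zero_add, div_self (ne_of_gt hs), one_smul]

lemma norm_comb_sq {n : ℕ} {x y : EuclideanSpace ℝ (Fin n)}
    (hx : ‖x‖ = 1) (hy : ‖y‖ = 1) (a b : ℝ) :
    ‖a • x + b • y‖ ^ 2 = a ^ 2 + 2 * (a * b) * ⟪x, y⟫_ℝ + b ^ 2 := by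
  rw [norm_add_sq_real, norm_smul, norm_smul, real_inner_smul_left, real_inner_smul_right,
    hx, hy]
  simp only [Real.norm_eq_abs, mul_one, sq_abs]
  ring

lemma norm_geoSeg {n : ℕ} {x y : EuclideanSpace ℝ (Fin n)}
    (hx : ‖x‖ = 1) (hy : ‖y‖ = 1) (h1 : -1 < ⟪x, y⟫_ℝ) (h2 : ⟪x, y⟫_ℝ < 1) (t : ℝ) :
    ‖geoSeg x y t‖ = 1 := by
  set θ := Real.arccos ⟪x, y⟫_ℝ with hθ
  have hcos : Real.cos θ = ⟪x, y⟫_ℝ := Real.cos_arccos (le_of_lt h1) (le_of_lt h2)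
  have hθpos : 0 < θ := Real.arccos_pos.2 h2
  have hθlt : θ < Real.pi :=
    lt_of_le_of_ne (Real.arccos_le_pi _) (fun hh => by
      have := Real.arccos_eq_pi.1 hh; linarith)
  have hs : 0 < Real.sin θ := Real.sin_pos_of_pos_of_lt_pi hθpos hθlt
  have key : ‖geoSeg x y t‖ ^ 2 = 1 := by
    rw [geoSeg_eq h1 h2 t, ← hθ, norm_comb_sq hx hy, ← hcos]
    have hsum : (1 - t) * θ + t * θ = θ := by ring
    have := trig3 ((1 - t) * θ) (t * θ)
    rw [hsum] at this
    field_simp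
    linear_combination this
  have hn := norm_nonneg (geoSeg x y t)
  nlinarith [key, hn]

lemma exists_geoSeg_param {n : ℕ} {x y : EuclideanSpace ℝ (Fin n)}
    (hx : ‖x‖ = 1) (hy : ‖y‖ = 1) (h1 : -1 < ⟪x, y⟫_ℝ) {a b : ℝ}
    (ha : 0 ≤ a) (hb : 0 ≤ b) (hn : ‖a • x + b • y‖ = 1) :
    ∃ t ∈ Set.Icc (0 : ℝ) 1, geoSeg x y t = a • x + b • y := by
  obtain ⟨hge, hle⟩ := inner_lt_one_aux hx hy
  rcases hle.eq_or_lt with hc | hc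
  · have hxy : x = y := (inner_eq_one_iff_of_norm_eq_one hx hy).1 hc
    subst hxy
    have hcomb : a • x + b • x = (a + b) • x := by rw [add_smul]
    have hab : a + b = 1 := by
      rw [hcomb, norm_smul, hx, mul_one, Real.norm_eq_abs, abs_of_nonneg (by linarith)] at hn
      exact hn
    refine ⟨0, ⟨le_refl _, zero_le_one⟩, ?_⟩
    rw [geoSeg_zero, hcomb, hab, one_smul]
  · set c := ⟪x, y⟫_ℝ with hcdef
    set θ := Real.arccos c with hθ
    have hθpos : 0 < θ := Real.arccos_pos.2 hc
    have hθlt : θ < Real.pi :=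
      lt_of_le_of_ne (Real.arccos_le_pi _) (fun hh => by
        have := Real.arccos_eq_pi.1 hh; rw [hcdef] at this; linarith)
    have hs : 0 < Real.sin θ := Real.sin_pos_of_pos_of_lt_pi hθpos hθlt
    set f : ℝ → ℝ := fun t => a * Real.sin (t * θ) - b * Real.sin ((1 - t) * θ) with hf
    have hf0 : f 0 ≤ 0 := by
      have e : f 0 = -(b * Real.sin θ) := by simp [hf]
      rw [e, neg_nonpos]
      exact mul_nonneg hb hs.le
    have hf1 : 0 ≤ f 1 := by
      have e : f 1 = a * Real.sin θ := by simp [hf]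
      rw [e]
      exact mul_nonneg ha hs.le
    have hfc : ContinuousOn f (Set.Icc 0 1) := by
      apply Continuous.continuousOn
      fun_prop
    obtain ⟨t, ht, hft⟩ := intermediate_value_Icc zero_le_one hfc ⟨hf0, hf1⟩
    refine ⟨t, ht, ?_⟩
    obtain ⟨ht0, ht1⟩ := ht
    have hsinb : 0 ≤ Real.sin (t * θ) := by
      apply Real.sin_nonneg_of_nonneg_of_le_pi
      · positivity
      · nlinarith
    have hsina : 0 ≤ Real.sin ((1 - t) * θ) := by
      apply Real.sin_nonneg_of_nonneg_of_le_pi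
      · have h01 : 0 ≤ 1 - t := by linarith
        positivity
      · nlinarith
    have heq : a * Real.sin (t * θ) = b * Real.sin ((1 - t) * θ) := by
      have h' : a * Real.sin (t * θ) - b * Real.sin ((1 - t) * θ) = 0 := hft
      linarith
    rw [geoSeg_eq h1 hc t, ← hθ]
    set p := Real.sin ((1 - t) * θ) / Real.sin θ with hp
    set q := Real.sin (t * θ) / Real.sin θ with hq
    have hppos : 0 ≤ p := div_nonneg hsina hs.le
    have hqpos : 0 ≤ q := div_nonneg hsinb hs.le
    have hrel : a * q = b * p := by
      rw [hq, hp, ← mul_div_assoc, ← mul_div_assoc, heq]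
    have hng : ‖p • x + q • y‖ = 1 := by
      have h' := norm_geoSeg hx hy h1 hc t
      rw [geoSeg_eq h1 hc t, ← hθ] at h'
      exact h'
    rcases ha.eq_or_lt with haz | haz
    · have hb1 : b = 1 := by
        rw [← haz, zero_smul, zero_add, norm_smul, hy, mul_one, Real.norm_eq_abs,
          abs_of_nonneg hb] at hn
        exact hn
      have hbp : b * p = 0 := by rw [← hrel, ← haz, zero_mul]
      have hpz : p = 0 := by
        rcases mul_eq_zero.1 hbp with h | h
        · rw [hb1] at h; norm_num at h
        · exact h
      have hq1 : q = 1 := by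
        rw [hpz, zero_smul, zero_add, norm_smul, hy, mul_one, Real.norm_eq_abs,
          abs_of_nonneg hqpos] at hng
        exact hng
      rw [hpz, hq1, ← haz, hb1]
    · have ha' : a ≠ 0 := ne_of_gt haz
      have hqeq : q = b * p / a := by
        field_simp
        linarith [hrel]
      have e1 : p / a * a = p := div_mul_cancel₀ p ha'
      have e2 : p / a * b = q := by rw [hqeq]; ring
      have hcollin : p • x + q • y = (p / a) • (a • x + b • y) := by
        rw [smul_add, smul_smul, smul_smul, e1, e2]
      have hpa : p / a = 1 := by
        rw [hcollin, norm_smul, hn, mul_one, Real.norm_eq_abs,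
          abs_of_nonneg (div_nonneg hppos haz.le)] at hng
        exact hng
      rw [hcollin, hpa, one_smul]

section Cone
open Pointwise
variable {n : ℕ} {K : Set (EuclideanSpace ℝ (Fin n))}

lemma cone_add_mem (hcone : ∀ x ∈ K, ∀ t : ℝ, 0 < t → t • x ∈ K)
    (hconvex : Convex ℝ K) {x y : EuclideanSpace ℝ (Fin n)}
    (hx : x ∈ K) (hy : y ∈ K) : x + y ∈ K := by
  have hmid : (1/2 : ℝ) • x + (1/2 : ℝ) • y ∈ K :=
    hconvex hx hy (by norm_num) (by norm_num) (by norm_num)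
  have := hcone _ hmid 2 (by norm_num)
  rw [smul_add, smul_smul, smul_smul] at this
  norm_num at this
  exact this

lemma cone_zero_mem (hcone : ∀ x ∈ K, ∀ t : ℝ, 0 < t → t • x ∈ K)
    (hclosed : IsClosed K) (hne : (interior K).Nonempty) : (0 : EuclideanSpace ℝ (Fin n)) ∈ K := by
  obtain ⟨e, he⟩ := hne
  have heK : e ∈ K := interior_subset he
  have htend : Filter.Tendsto (fun t : ℝ => t • e) (nhdsWithin 0 (Set.Ioi 0)) (nhds 0) := by
    have h := (Filter.tendsto_id (x := nhds (0:ℝ))).smul_const e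
    simp only [id_eq, zero_smul] at h
    exact h.mono_left nhdsWithin_le_nhds
  exact hclosed.mem_of_tendsto htend
    (Filter.eventually_of_mem self_mem_nhdsWithin fun t ht => hcone e heK t ht)

lemma cone_smul_interior (hcone : ∀ x ∈ K, ∀ t : ℝ, 0 < t → t • x ∈ K)
    {x : EuclideanSpace ℝ (Fin n)} {t : ℝ} (ht : 0 < t) (hx : x ∈ interior K) :
    t • x ∈ interior K := by
  have hopen : IsOpen (t • interior K) := isOpen_interior.smul₀ (ne_of_gt ht)
  have hsub : t • interior K ⊆ K := by
    rintro _ ⟨z, hz, rfl⟩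
    exact hcone z (interior_subset hz) t ht
  exact interior_maximal hsub hopen (Set.smul_mem_smul_set hx)

lemma cone_add_interior (hcone : ∀ x ∈ K, ∀ t : ℝ, 0 < t → t • x ∈ K)
    (hconvex : Convex ℝ K) {x y : EuclideanSpace ℝ (Fin n)}
    (hx : x ∈ K) (hy : y ∈ interior K) : x + y ∈ interior K := by
  have hopen : IsOpen ((x + ·) '' interior K) := (Homeomorph.addLeft x).isOpenMap _ isOpen_interior
  have hsub : (x + ·) '' interior K ⊆ K := by
    rintro _ ⟨z, hz, rfl⟩
    exact cone_add_mem hcone hconvex hx (interior_subset hz)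
  exact interior_maximal hsub hopen ⟨y, hy, rfl⟩

lemma cone_comb_interior (hcone : ∀ x ∈ K, ∀ t : ℝ, 0 < t → t • x ∈ K)
    (hconvex : Convex ℝ K) (hclosed : IsClosed K) (hne : (interior K).Nonempty)
    {x y : EuclideanSpace ℝ (Fin n)} {a b : ℝ}
    (hx : x ∈ interior K) (hy : y ∈ interior K) (ha : 0 ≤ a) (hb : 0 ≤ b)
    (hab : 0 < a + b) : a • x + b • y ∈ interior K := by
  rcases ha.eq_or_lt with haz | haz
  · have hbz : 0 < b := by rw [← haz] at hab; simpa using hab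
    rw [← haz, zero_smul, zero_add]
    exact cone_smul_interior hcone hbz hy
  · rcases hb.eq_or_lt with hbz | hbz
    · rw [← hbz, zero_smul, add_zero]
      exact cone_smul_interior hcone haz hx
    · have h1 : a • x ∈ interior K := cone_smul_interior hcone haz hx
      have h2 : b • y ∈ K := hcone y (interior_subset hy) b hbz
      rw [add_comm]
      exact cone_add_interior hcone hconvex h2 h1

lemma cone_zero_not_interior (hpointed : K ∩ (-K) ⊆ {0}) (hn : 1 ≤ n) :
    (0 : EuclideanSpace ℝ (Fin n)) ∉ interior K := by
  intro h0
  obtain ⟨ε, hε, hball⟩ := Metric.mem_nhds_iff.1 (mem_interior_iff_mem_nhds.1 h0)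
  set p : EuclideanSpace ℝ (Fin n) := EuclideanSpace.single ⟨0, hn⟩ ((ε/2 : ℝ))
  have hpnorm : ‖p‖ = ε / 2 := by
    rw [EuclideanSpace.norm_single, Real.norm_eq_abs, abs_of_pos (by positivity)]
  have hpmem : p ∈ K := hball (by
    simp only [Metric.mem_ball, dist_zero_right, hpnorm]
    linarith)
  have hnpmem : -p ∈ K := hball (by
    simp only [Metric.mem_ball, dist_zero_right, norm_neg, hpnorm]
    linarith)
  have : p = 0 := hpointed ⟨hpmem, by simpa using hnpmem⟩
  have h2 : p ⟨0, hn⟩ = 0 := by rw [this]; rfl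
  have h3 : (ε / 2 : ℝ) = 0 := by simpa [p, EuclideanSpace.single_apply] using h2
  linarith

end Cone

section Main
open Pointwise
variable {n : ℕ} {K : Set (EuclideanSpace ℝ (Fin n))}

lemma neg_one_lt_inner_of_cone (hpointed : K ∩ (-K) ⊆ {0})
    {x y : EuclideanSpace ℝ (Fin n)} (hx1 : ‖x‖ = 1) (hy1 : ‖y‖ = 1)
    (hxK : x ∈ K) (hyK : y ∈ K) : -1 < ⟪x, y⟫_ℝ := by
  obtain ⟨hge, _⟩ := inner_lt_one_aux hx1 hy1
  rcases hge.eq_or_lt with h | h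
  · exfalso
    have hinner : ⟪x, -y⟫_ℝ = 1 := by rw [inner_neg_right, ← h]; ring
    have hxy : x = -y := (inner_eq_one_iff_of_norm_eq_one hx1 (by rwa [norm_neg])).1 hinner
    have hx0 : x = 0 := hpointed ⟨hxK, by simpa [hxy] using hyK⟩
    rw [hx0, norm_zero] at hx1
    norm_num at hx1
  · exact h

lemma ne_neg_of_cone (hpointed : K ∩ (-K) ⊆ {0})
    {x y : EuclideanSpace ℝ (Fin n)} (hx1 : ‖x‖ = 1) (hy1 : ‖y‖ = 1)
    (hxK : x ∈ K) (hyK : y ∈ K) : y ≠ -x := by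
  intro h
  have hx0 : x = 0 := hpointed ⟨hxK, by simpa [← h] using hyK⟩
  rw [hx0, norm_zero] at hx1
  norm_num at hx1

/-- The geodesic segment between two unit vectors of `interior K` stays in
`sphere 0 1 ∩ interior K`. -/
lemma geoSeg_mem_C (hcone : ∀ x ∈ K, ∀ t : ℝ, 0 < t → t • x ∈ K)
    (hconvex : Convex ℝ K) (hclosed : IsClosed K) (hne : (interior K).Nonempty)
    {x y : EuclideanSpace ℝ (Fin n)} (hx1 : ‖x‖ = 1) (hy1 : ‖y‖ = 1)
    (hxi : x ∈ interior K) (hyi : y ∈ interior K)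
    (h1 : -1 < ⟪x, y⟫_ℝ) :
    ∀ t ∈ Set.Icc (0 : ℝ) 1, geoSeg x y t ∈ Metric.sphere (0 : EuclideanSpace ℝ (Fin n)) 1 ∩ interior K := by
  intro t ht
  obtain ⟨hge, hle⟩ := inner_lt_one_aux hx1 hy1
  rcases hle.eq_or_lt with hc | hc
  · have hxy : x = y := (inner_eq_one_iff_of_norm_eq_one hx1 hy1).1 hc
    subst hxy
    rw [geoSeg_self hx1]
    exact ⟨by rwa [mem_sphere_zero_iff_norm], hxi⟩
  · have hnorm : ‖geoSeg x y t‖ = 1 := norm_geoSeg hx1 hy1 h1 hc t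
    constructor
    · rwa [mem_sphere_zero_iff_norm]
    · set θ := Real.arccos ⟪x, y⟫_ℝ with hθ
      have hθpos : 0 < θ := Real.arccos_pos.2 hc
      have hθlt : θ < Real.pi :=
        lt_of_le_of_ne (Real.arccos_le_pi _) (fun hh => by
          have := Real.arccos_eq_pi.1 hh; linarith)
      obtain ⟨ht0, ht1⟩ := ht
      have hp : 0 ≤ Real.sin ((1 - t) * θ) / Real.sin θ := by
        apply div_nonneg _ (Real.sin_nonneg_of_nonneg_of_le_pi hθpos.le hθlt.le)
        apply Real.sin_nonneg_of_nonneg_of_le_pi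
        · have : 0 ≤ 1 - t := by linarith
          positivity
        · nlinarith
      have hq : 0 ≤ Real.sin (t * θ) / Real.sin θ := by
        apply div_nonneg _ (Real.sin_nonneg_of_nonneg_of_le_pi hθpos.le hθlt.le)
        apply Real.sin_nonneg_of_nonneg_of_le_pi
        · positivity
        · nlinarith
      rw [geoSeg_eq h1 hc t, ← hθ]
      apply cone_comb_interior hcone hconvex hclosed hne hxi hyi hp hq
      -- 0 < p + q
      by_contra hsum
      push_neg at hsum
      have hp0 : Real.sin ((1 - t) * θ) / Real.sin θ = 0 := by linarith
      have hq0 : Real.sin (t * θ) / Real.sin θ = 0 := by linarith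
      rw [geoSeg_eq h1 hc t, ← hθ, hp0, hq0, zero_smul, zero_smul, add_zero, norm_zero] at hnorm
      norm_num at hnorm

end Main

section Main2
variable {n : ℕ} {K : Set (EuclideanSpace ℝ (Fin n))}

lemma forward_core (hcone : ∀ x ∈ K, ∀ t : ℝ, 0 < t → t • x ∈ K)
    (hconvex : Convex ℝ K) (hclosed : IsClosed K)
    (hpointed : K ∩ (-K) ⊆ {0}) (hne : (interior K).Nonempty)
    (A : Matrix (Fin n) (Fin n) ℝ)
    (hQ : ∀ x ∈ Metric.sphere (0 : EuclideanSpace ℝ (Fin n)) 1 ∩ interior K,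
      ∀ y ∈ Metric.sphere (0 : EuclideanSpace ℝ (Fin n)) 1 ∩ interior K,
      ∀ γ : ℝ → EuclideanSpace ℝ (Fin n),
      (‖x‖ = 1 ∧ ‖y‖ = 1 ∧
        ((y ≠ -x ∧ γ = geoSeg x y) ∨ (y = -x ∧ ∃ v : EuclideanSpace ℝ (Fin n), ‖v‖ = 1 ∧
          ⟪x, v⟫_ℝ = 0 ∧ γ = fun t => Real.cos (t * Real.pi) • x + Real.sin (t * Real.pi) • v))) →
      (∀ t ∈ Set.Icc (0 : ℝ) 1, γ t ∈ Metric.sphere (0 : EuclideanSpace ℝ (Fin n)) 1 ∩ interior K) →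
      ∀ t₁ t t₂ : ℝ, 0 ≤ t₁ → t₁ ≤ t → t ≤ t₂ → t₂ ≤ 1 →
        ⟪mulVecE A (γ t), γ t⟫_ℝ ≤ max (⟪mulVecE A (γ t₁), γ t₁⟫_ℝ) (⟪mulVecE A (γ t₂), γ t₂⟫_ℝ))
    {u v : EuclideanSpace ℝ (Fin n)} (hu : u ∈ interior K) (hv : v ∈ interior K)
    (hu0 : u ≠ 0) (hv0 : v ≠ 0) {a b : ℝ} (ha : 0 ≤ a) (hb : 0 ≤ b)
    (hw0 : a • u + b • v ≠ 0) :
    ⟪mulVecE A (a • u + b • v), a • u + b • v⟫_ℝ / ‖a • u + b • v‖ ^ 2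
      ≤ max (⟪mulVecE A u, u⟫_ℝ / ‖u‖ ^ 2) (⟪mulVecE A v, v⟫_ℝ / ‖v‖ ^ 2) := by
  set w := a • u + b • v with hwdef
  set x := ‖u‖⁻¹ • u with hxdef
  set y := ‖v‖⁻¹ • v with hydef
  have hx1 : ‖x‖ = 1 := norm_smul_inv_norm hu0
  have hy1 : ‖y‖ = 1 := norm_smul_inv_norm hv0
  have hunorm : (0:ℝ) < ‖u‖ := norm_pos_iff.2 hu0
  have hvnorm : (0:ℝ) < ‖v‖ := norm_pos_iff.2 hv0
  have hwnorm : (0:ℝ) < ‖w‖ := norm_pos_iff.2 hw0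
  have hxi : x ∈ interior K := cone_smul_interior hcone (by positivity) hu
  have hyi : y ∈ interior K := cone_smul_interior hcone (by positivity) hv
  have hxC : x ∈ Metric.sphere (0 : EuclideanSpace ℝ (Fin n)) 1 ∩ interior K :=
    ⟨by rwa [mem_sphere_zero_iff_norm], hxi⟩
  have hyC : y ∈ Metric.sphere (0 : EuclideanSpace ℝ (Fin n)) 1 ∩ interior K :=
    ⟨by rwa [mem_sphere_zero_iff_norm], hyi⟩
  have h1 : -1 < ⟪x, y⟫_ℝ :=
    neg_one_lt_inner_of_cone hpointed hx1 hy1 (interior_subset hxi) (interior_subset hyi)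
  -- the normalized combination
  set a' := a * ‖u‖ / ‖w‖ with ha'def
  set b' := b * ‖v‖ / ‖w‖ with hb'def
  have ha' : 0 ≤ a' := by positivity
  have hb' : 0 ≤ b' := by positivity
  have hzeq : a' • x + b' • y = ‖w‖⁻¹ • w := by
    rw [hxdef, hydef, hwdef, smul_add, smul_smul, smul_smul, smul_smul, smul_smul]
    congr 2
    · rw [ha'def]; field_simp; rw [← hwdef]; ring_nf; rw [mul_inv_cancel_right₀ (ne_of_gt hwnorm)]
    · rw [hb'def]; field_simp; rw [← hwdef]; ring_nf; rw [mul_inv_cancel_right₀ (ne_of_gt hwnorm)]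
  have hz1 : ‖a' • x + b' • y‖ = 1 := by
    rw [hzeq, norm_smul, Real.norm_eq_abs, abs_of_pos (by positivity), inv_mul_cancel₀ (ne_of_gt hwnorm)]
  obtain ⟨t, ht, hgt⟩ := exists_geoSeg_param hx1 hy1 h1 ha' hb' hz1
  have hynx : y ≠ -x :=
    ne_neg_of_cone hpointed hx1 hy1 (interior_subset hxi) (interior_subset hyi)
  have hγC := geoSeg_mem_C hcone hconvex hclosed hne hx1 hy1 hxi hyi h1
  have key := hQ x hxC y hyC (geoSeg x y) ⟨hx1, hy1, Or.inl ⟨hynx, rfl⟩⟩ hγC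
    0 t 1 le_rfl ht.1 ht.2 le_rfl
  rw [geoSeg_zero, geoSeg_one hx1 hy1 (by linarith), hgt, hzeq] at key
  rw [q_smul, q_smul, q_smul] at key
  have e1 : (‖u‖⁻¹ : ℝ) ^ 2 * ⟪mulVecE A u, u⟫_ℝ = ⟪mulVecE A u, u⟫_ℝ / ‖u‖ ^ 2 := by
    field_simp
  have e2 : (‖v‖⁻¹ : ℝ) ^ 2 * ⟪mulVecE A v, v⟫_ℝ = ⟪mulVecE A v, v⟫_ℝ / ‖v‖ ^ 2 := by
    field_simp
  have e3 : (‖w‖⁻¹ : ℝ) ^ 2 * ⟪mulVecE A w, w⟫_ℝ = ⟪mulVecE A w, w⟫_ℝ / ‖w‖ ^ 2 := by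
    field_simp
  rw [e1, e2, e3] at key
  exact key

end Main2

set_option maxHeartbeats 1000000 in
/-- For a proper subdual cone `K ⊆ ℝⁿ`, `C = 𝕊^{n-1} ∩ int K` and a symmetric matrix `A`,
the quadratic function `q_A(x) = ⟪Ax, x⟫` is spherically quasi-convex on `C` if and only if
for every `c ∈ ℝ` the cone `{x ∈ K : ⟪(A - c·I)x, x⟫ ≤ 0}` is convex. -/
theorem quadratic_sph_quasiconvex_iff_shifted_cone_convex {n : ℕ}
    (K : Set (EuclideanSpace ℝ (Fin n)))
    (hcone : ∀ x ∈ K, ∀ t : ℝ, 0 < t → t • x ∈ K)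
    (hclosed : IsClosed K) (hconvex : Convex ℝ K)
    (hpointed : K ∩ (-K) ⊆ {0}) (hint : (interior K).Nonempty)
    (hsubdual : K ⊆ {x | ∀ y ∈ K, 0 ≤ ⟪x, y⟫_ℝ})
    (A : Matrix (Fin n) (Fin n) ℝ) (hA : A.IsSymm) :
    SphQuasiConvexOn (Metric.sphere 0 1 ∩ interior K)
        (fun x => ⟪mulVecE A x, x⟫_ℝ) ↔
      ∀ c : ℝ, Convex ℝ {x | x ∈ K ∧
        ⟪mulVecE (A - c • (1 : Matrix (Fin n) (Fin n) ℝ)) x, x⟫_ℝ ≤ 0} := by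
  constructor
  · -- quasiconvex → cones convex
    intro hQ c
    intro u huS v hvS a b ha hb hab
    obtain ⟨huK, huq⟩ := huS
    obtain ⟨hvK, hvq⟩ := hvS
    refine ⟨hconvex huK hvK ha hb hab, ?_⟩
    rw [q_shift] at huq hvq ⊢
    by_cases hu0 : u = 0
    · subst hu0
      rw [smul_zero, zero_add, q_smul, norm_smul, Real.norm_eq_abs, mul_pow, sq_abs]
      nlinarith [sq_nonneg b]
    by_cases hv0 : v = 0
    · subst hv0
      rw [smul_zero, add_zero, q_smul, norm_smul, Real.norm_eq_abs, mul_pow, sq_abs]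
      nlinarith [sq_nonneg a]
    by_cases hw0 : a • u + b • v = 0
    · rw [hw0]
      have hz : ⟪mulVecE A (0 : EuclideanSpace ℝ (Fin n)),
          (0 : EuclideanSpace ℝ (Fin n))⟫_ℝ = 0 := inner_zero_right _
      rw [hz, norm_zero]
      norm_num
    -- main case: approximate by interior points
    have hn : 1 ≤ n := by
      rcases Nat.eq_zero_or_pos n with h | h
      · exfalso; apply hu0; subst h; ext i; exact i.elim0
      · exact h
    obtain ⟨e, he⟩ := hint
    have h0int : (0 : EuclideanSpace ℝ (Fin n)) ∉ interior K :=
      cone_zero_not_interior hpointed hn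
    have hunorm : (0:ℝ) < ‖u‖ := norm_pos_iff.2 hu0
    have hvnorm : (0:ℝ) < ‖v‖ := norm_pos_iff.2 hv0
    set w := a • u + b • v with hwdef
    have hwnorm : (0:ℝ) < ‖w‖ := norm_pos_iff.2 hw0
    have key : ∀ ε ∈ Set.Ioi (0:ℝ),
        ⟪mulVecE A (w + ε • e), w + ε • e⟫_ℝ / ‖w + ε • e‖ ^ 2
          ≤ max (⟪mulVecE A (u + ε • e), u + ε • e⟫_ℝ / ‖u + ε • e‖ ^ 2)
              (⟪mulVecE A (v + ε • e), v + ε • e⟫_ℝ / ‖v + ε • e‖ ^ 2) := by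
      intro ε hε
      rw [Set.mem_Ioi] at hε
      have hee : ε • e ∈ interior K := cone_smul_interior hcone hε he
      have huε : u + ε • e ∈ interior K := cone_add_interior hcone hconvex huK hee
      have hvε : v + ε • e ∈ interior K := cone_add_interior hcone hconvex hvK hee
      have huε0 : u + ε • e ≠ 0 := fun h => h0int (h ▸ huε)
      have hvε0 : v + ε • e ≠ 0 := fun h => h0int (h ▸ hvε)
      have hcomb : a • (u + ε • e) + b • (v + ε • e) = w + ε • e := by
        rw [hwdef]
        match_scalars <;> first | ring1 | linear_combination ε * hab
      have hwε0 : a • (u + ε • e) + b • (v + ε • e) ≠ 0 := by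
        rw [hcomb]
        intro h
        exact h0int (h ▸ cone_add_interior hcone hconvex (hconvex huK hvK ha hb hab) hee)
      have hcore := forward_core hcone hconvex hclosed hpointed ⟨e, he⟩ A hQ huε hvε huε0 hvε0
        ha hb hwε0
      rw [hcomb] at hcore
      exact hcore
    have hpath : ∀ z : EuclideanSpace ℝ (Fin n),
        Filter.Tendsto (fun ε : ℝ => z + ε • e) (nhdsWithin 0 (Set.Ioi 0)) (nhds z) := by
      intro z
      have h1 : Continuous fun ε : ℝ => z + ε • e :=
        continuous_const.add (continuous_id.smul continuous_const)
      have h2 := h1.tendsto 0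
      simp only [zero_smul, add_zero] at h2
      exact h2.mono_left nhdsWithin_le_nhds
    have hrat : ∀ z : EuclideanSpace ℝ (Fin n), z ≠ 0 →
        Filter.Tendsto (fun ε : ℝ => ⟪mulVecE A (z + ε • e), z + ε • e⟫_ℝ / ‖z + ε • e‖ ^ 2)
          (nhdsWithin 0 (Set.Ioi 0)) (nhds (⟪mulVecE A z, z⟫_ℝ / ‖z‖ ^ 2)) := by
      intro z hz
      have h1 := ((qcont A).tendsto z).comp (hpath z)
      have h2 := ((continuous_norm.tendsto z).comp (hpath z)).pow 2
      exact h1.div h2 (pow_ne_zero 2 (norm_ne_zero_iff.2 hz))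
    have hlim := (hrat u hu0).max (hrat v hv0)
    have hfinal : ⟪mulVecE A w, w⟫_ℝ / ‖w‖ ^ 2
        ≤ max (⟪mulVecE A u, u⟫_ℝ / ‖u‖ ^ 2) (⟪mulVecE A v, v⟫_ℝ / ‖v‖ ^ 2) :=
      le_of_tendsto_of_tendsto (hrat w hw0) hlim
        (Filter.eventually_of_mem self_mem_nhdsWithin key)
    have hmax : max (⟪mulVecE A u, u⟫_ℝ / ‖u‖ ^ 2) (⟪mulVecE A v, v⟫_ℝ / ‖v‖ ^ 2) ≤ c := by
      apply max_le
      · rw [div_le_iff₀ (by positivity)]; nlinarith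
      · rw [div_le_iff₀ (by positivity)]; nlinarith
    have hfin2 := hfinal.trans hmax
    rw [div_le_iff₀ (by positivity)] at hfin2
    nlinarith
  · -- cones convex → quasiconvex
    intro hcc
    intro x hx y hy γ hgeo hγC t₁ t t₂ ht10 ht1t htt2 ht21
    obtain ⟨hx1, hy1, hcase⟩ := hgeo
    obtain ⟨hxs, hxi⟩ := hx
    obtain ⟨hys, hyi⟩ := hy
    rcases hcase with ⟨hynx, hγ⟩ | ⟨hyx, -⟩
    swap
    · exact absurd hyx
        (ne_neg_of_cone hpointed hx1 hy1 (interior_subset hxi) (interior_subset hyi))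
    subst hγ
    have h1 : -1 < ⟪x, y⟫_ℝ :=
      neg_one_lt_inner_of_cone hpointed hx1 hy1 (interior_subset hxi) (interior_subset hyi)
    obtain ⟨hge, hle⟩ := inner_lt_one_aux hx1 hy1
    simp only []
    rcases hle.eq_or_lt with hc | hc
    · -- x = y : geodesic is constant
      have hxy : x = y := (inner_eq_one_iff_of_norm_eq_one hx1 hy1).1 hc
      subst hxy
      rw [geoSeg_self hx1, geoSeg_self hx1]
      exact le_max_left _ _
    · rcases eq_or_lt_of_le (ht1t.trans htt2) with hts | hts
      · -- t₁ = t₂ hence t = t₁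
        have htt : t = t₁ := le_antisymm (hts ▸ htt2) ht1t
        rw [htt]
        exact le_max_left _ _
      · -- main case
        set θ := Real.arccos ⟪x, y⟫_ℝ with hθ
        have hθpos : 0 < θ := Real.arccos_pos.2 hc
        have hθlt : θ < Real.pi :=
          lt_of_le_of_ne (Real.arccos_le_pi _) (fun hh => by
            have := Real.arccos_eq_pi.1 hh; linarith)
        have hsθ : 0 < Real.sin θ := Real.sin_pos_of_pos_of_lt_pi hθpos hθlt
        set cM := max (⟪mulVecE A (geoSeg x y t₁), geoSeg x y t₁⟫_ℝ)
          (⟪mulVecE A (geoSeg x y t₂), geoSeg x y t₂⟫_ℝ) with hcM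
        have ht1mem : t₁ ∈ Set.Icc (0:ℝ) 1 := ⟨ht10, (ht1t.trans htt2).trans ht21⟩
        have ht2mem : t₂ ∈ Set.Icc (0:ℝ) 1 := ⟨ht10.trans (ht1t.trans htt2), ht21⟩
        have htmem : t ∈ Set.Icc (0:ℝ) 1 := ⟨ht10.trans ht1t, htt2.trans ht21⟩
        obtain ⟨hus, hui⟩ := hγC t₁ ht1mem
        obtain ⟨hvs, hvi⟩ := hγC t₂ ht2mem
        obtain ⟨hgs, hgi⟩ := hγC t htmem
        have hun : ‖geoSeg x y t₁‖ = 1 := mem_sphere_zero_iff_norm.1 hus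
        have hvn : ‖geoSeg x y t₂‖ = 1 := mem_sphere_zero_iff_norm.1 hvs
        have hgn : ‖geoSeg x y t‖ = 1 := mem_sphere_zero_iff_norm.1 hgs
        set S := Real.sin ((t₂ - t₁) * θ) with hS
        set α := Real.sin ((t₂ - t) * θ) with hα
        set β := Real.sin ((t - t₁) * θ) with hβ
        have hSpos : 0 < S := by
          apply Real.sin_pos_of_pos_of_lt_pi
          · have : 0 < t₂ - t₁ := by linarith
            positivity
          · nlinarith
        have hαpos : 0 ≤ α := by
          apply Real.sin_nonneg_of_nonneg_of_le_pi
          · have : 0 ≤ t₂ - t := by linarith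
            positivity
          · nlinarith
        have hβpos : 0 ≤ β := by
          apply Real.sin_nonneg_of_nonneg_of_le_pi
          · have : 0 ≤ t - t₁ := by linarith
            positivity
          · nlinarith
        have c1 : S * (Real.sin ((1 - t) * θ) / Real.sin θ)
            = α * (Real.sin ((1 - t₁) * θ) / Real.sin θ)
              + β * (Real.sin ((1 - t₂) * θ) / Real.sin θ) := by
          rw [hS, hα, hβ]
          linear_combination (trig1 θ t₁ t t₂) / Real.sin θ
        have c2 : S * (Real.sin (t * θ) / Real.sin θ)
            = α * (Real.sin (t₁ * θ) / Real.sin θ)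
              + β * (Real.sin (t₂ * θ) / Real.sin θ) := by
          rw [hS, hα, hβ]
          linear_combination (trig2 θ t₁ t t₂) / Real.sin θ
        have hvec : S • geoSeg x y t = α • geoSeg x y t₁ + β • geoSeg x y t₂ := by
          rw [geoSeg_eq h1 hc t, geoSeg_eq h1 hc t₁, geoSeg_eq h1 hc t₂, ← hθ]
          simp only [smul_add, smul_smul]
          rw [c1, c2, add_smul, add_smul]
          abel
        -- membership in the sublevel cone
        have huS : geoSeg x y t₁ ∈ {z | z ∈ K ∧
            ⟪mulVecE (A - cM • (1 : Matrix (Fin n) (Fin n) ℝ)) z, z⟫_ℝ ≤ 0} := by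
          refine ⟨interior_subset hui, ?_⟩
          rw [q_shift, hun]
          have := le_max_left (⟪mulVecE A (geoSeg x y t₁), geoSeg x y t₁⟫_ℝ)
            (⟪mulVecE A (geoSeg x y t₂), geoSeg x y t₂⟫_ℝ)
          rw [← hcM] at this
          nlinarith
        have hvS : geoSeg x y t₂ ∈ {z | z ∈ K ∧
            ⟪mulVecE (A - cM • (1 : Matrix (Fin n) (Fin n) ℝ)) z, z⟫_ℝ ≤ 0} := by
          refine ⟨interior_subset hvi, ?_⟩
          rw [q_shift, hvn]
          have := le_max_right (⟪mulVecE A (geoSeg x y t₁), geoSeg x y t₁⟫_ℝ)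
            (⟪mulVecE A (geoSeg x y t₂), geoSeg x y t₂⟫_ℝ)
          rw [← hcM] at this
          nlinarith
        have hαβ : 0 < α + β := by
          rcases (add_nonneg hαpos hβpos).eq_or_lt with h0 | h0
          · exfalso
            have hα0 : α = 0 := by linarith
            have hβ0 : β = 0 := by linarith
            rw [hα0, hβ0, zero_smul, zero_smul, add_zero] at hvec
            have : geoSeg x y t = 0 := by
              have := hvec
              rcases smul_eq_zero.1 this with h | h
              · exact absurd h (ne_of_gt hSpos)
              · exact h
            rw [this, norm_zero] at hgn
            norm_num at hgn
          · exact h0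
        have hzS := hcc cM huS hvS (div_nonneg hαpos hαβ.le) (div_nonneg hβpos hαβ.le)
          (by field_simp)
        have h2 : (α + β) • ((α/(α+β)) • geoSeg x y t₁ + (β/(α+β)) • geoSeg x y t₂)
            = α • geoSeg x y t₁ + β • geoSeg x y t₂ := by
          rw [smul_add, smul_smul, smul_smul]
          congr 2 <;> field_simp
        have h3 : geoSeg x y t = ((α+β)/S) •
            ((α/(α+β)) • geoSeg x y t₁ + (β/(α+β)) • geoSeg x y t₂) := by
          have e : geoSeg x y t = S⁻¹ • (S • geoSeg x y t) := by
            rw [smul_smul, inv_mul_cancel₀ (ne_of_gt hSpos), one_smul]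
          rw [e, hvec, ← h2, smul_smul]
          congr 1
          rw [div_eq_inv_mul]
        have hq := hzS.2
        have hfinal : ⟪mulVecE (A - cM • (1 : Matrix (Fin n) (Fin n) ℝ)) (geoSeg x y t),
            geoSeg x y t⟫_ℝ ≤ 0 := by
          rw [h3, q_smul]
          nlinarith [sq_nonneg ((α+β)/S)]
        rw [q_shift, hgn] at hfinal
        have : ⟪mulVecE A (geoSeg x y t), geoSeg x y t⟫_ℝ ≤ cM := by nlinarith
        exact this
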